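/- arXiv:2603.29824 — 5 statements merged into one kernel-verified Lean document; each statement's English description precedes it below -/
import Mathlib

section
/- Let J be an n×p real matrix with a compact singular value decomposition J = U D Vᵀ, where U ∈ ℝ^{n×k} and V ∈ ℝ^{p×k} have orthonormal columns and D ∈ ℝ^{k×k} is diagonal with strictly positive diagonal entries (k = rank J). Let H be any p×q real matrix and set J_r = JH and P = D Vᵀ H. Then JJ† − J_r J_r† = U (I_k − P P†) Uᵀ. -/
open Matrix

/-!
The Penrose conditions determine the pseudoinverse uniquely, and they are preserved when a matrix
is multiplied on the left by some `U` with `Uᵀ U = 1` (or on the right by the transpose of such a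
matrix). Hence `J† = V D⁻¹ Uᵀ`, so `J J† = U Uᵀ`, and, since `J_r = U P`, `J_r† = P† Uᵀ`, so
`J_r J_r† = U P P† Uᵀ`.
-/

/-- The four Penrose conditions: `Ap` is the Moore–Penrose pseudoinverse of `A`. -/
def IsMPInv {m n : Type*} [Fintype m] [Fintype n]
    (A : Matrix m n ℝ) (Ap : Matrix n m ℝ) : Prop :=
  A * Ap * A = A ∧ Ap * A * Ap = Ap ∧ (A * Ap)ᵀ = A * Ap ∧ (Ap * A)ᵀ = Ap * A

namespace IsMPInv

variable {l m n : Type*} [Fintype l] [Fintype m] [Fintype n]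

theorem unique {A : Matrix m n ℝ} {B C : Matrix n m ℝ}
    (hB : IsMPInv A B) (hC : IsMPInv A C) : B = C := by
  obtain ⟨hB₁, hB₂, hB₃, hB₄⟩ := hB
  obtain ⟨hC₁, hC₂, hC₃, hC₄⟩ := hC
  have hAB : A * B = A * C :=
    calc A * B = (A * C * A) * B := by rw [hC₁]
      _ = (A * C)ᵀ * (A * B)ᵀ := by rw [hC₃, hB₃, Matrix.mul_assoc (A * C)]
      _ = (A * B * A * C)ᵀ := by rw [← transpose_mul, Matrix.mul_assoc (A * B)]
      _ = A * C := by rw [hB₁, hC₃]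
  have hBA : B * A = C * A :=
    calc B * A = B * (A * C * A) := by rw [hC₁]
      _ = (B * A)ᵀ * (C * A)ᵀ := by rw [hB₄, hC₄]; simp only [Matrix.mul_assoc]
      _ = (C * (A * B * A))ᵀ := by rw [← transpose_mul]; simp only [Matrix.mul_assoc]
      _ = C * A := by rw [hB₁, hC₄]
  calc B = B * A * B := hB₂.symm
    _ = C * A * C := by rw [hBA, Matrix.mul_assoc, hAB, ← Matrix.mul_assoc]
    _ = C := hC₂

theorem transpose {A : Matrix m n ℝ} {B : Matrix n m ℝ} (h : IsMPInv A B) :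
    IsMPInv Aᵀ Bᵀ := by
  obtain ⟨h₁, h₂, h₃, h₄⟩ := h
  refine ⟨?_, ?_, ?_, ?_⟩
  · rw [← transpose_mul, ← transpose_mul, ← Matrix.mul_assoc, h₁]
  · rw [← transpose_mul, ← transpose_mul, ← Matrix.mul_assoc, h₂]
  · rw [← transpose_mul, h₄, h₄]
  · rw [← transpose_mul, h₃, h₃]

theorem isometry_mul [DecidableEq m] {U : Matrix l m ℝ} (hU : Uᵀ * U = 1) {A : Matrix m n ℝ}
    {B : Matrix n m ℝ} (h : IsMPInv A B) : IsMPInv (U * A) (B * Uᵀ) := by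
  obtain ⟨h₁, h₂, h₃, h₄⟩ := h
  have hBA : B * Uᵀ * (U * A) = B * A := by
    rw [Matrix.mul_assoc, ← Matrix.mul_assoc Uᵀ, hU, Matrix.one_mul]
  refine ⟨?_, ?_, ?_, ?_⟩
  · rw [Matrix.mul_assoc (U * A), hBA, Matrix.mul_assoc, ← Matrix.mul_assoc A, h₁]
  · rw [hBA, ← Matrix.mul_assoc, h₂]
  · simp only [transpose_mul, transpose_transpose, Matrix.mul_assoc]
    rw [← Matrix.mul_assoc Bᵀ, ← transpose_mul, h₃, Matrix.mul_assoc]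
  · rw [hBA, h₄]

theorem mul_transpose_isometry {A : Matrix l m ℝ} {B : Matrix m l ℝ} (h : IsMPInv A B)
    [DecidableEq m] {V : Matrix n m ℝ} (hV : Vᵀ * V = 1) : IsMPInv (A * Vᵀ) (V * B) := by
  simpa only [transpose_mul, transpose_transpose] using (h.transpose.isometry_mul hV).transpose

end IsMPInv

theorem isMPInv_diagonal {m : Type*} [Fintype m] [DecidableEq m] (d : m → ℝ) :
    IsMPInv (diagonal d) (diagonal d⁻¹) := by
  have inv_mul_mul_inv (a : ℝ) : a⁻¹ * a * a⁻¹ = a⁻¹ := by simpa using mul_inv_mul_cancel a⁻¹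
  refine ⟨?_, ?_, ?_, ?_⟩ <;> simp [diagonal_mul_diagonal, inv_mul_mul_inv]

/-- If `J = U D Vᵀ` is a compact SVD of `J` and `J_r = JH`, `P = D Vᵀ H`, then
`JJ† − J_r J_r† = U (I − P P†) Uᵀ`. -/
theorem projection_difference_compact_svd {n p q k : ℕ}
    (J : Matrix (Fin n) (Fin p) ℝ)
    (U : Matrix (Fin n) (Fin k) ℝ) (V : Matrix (Fin p) (Fin k) ℝ)
    (d : Fin k → ℝ)
    (hU : Uᵀ * U = 1) (hV : Vᵀ * V = 1) (hd : ∀ i, 0 < d i)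
    (hJ : J = U * diagonal d * Vᵀ)
    (H : Matrix (Fin p) (Fin q) ℝ)
    (Jr : Matrix (Fin n) (Fin q) ℝ) (hJr : Jr = J * H)
    (P : Matrix (Fin k) (Fin q) ℝ) (hP : P = diagonal d * Vᵀ * H)
    (Jp : Matrix (Fin p) (Fin n) ℝ) (hJp : IsMPInv J Jp)
    (Jrp : Matrix (Fin q) (Fin n) ℝ) (hJrp : IsMPInv Jr Jrp)
    (Pp : Matrix (Fin q) (Fin k) ℝ) (hPp : IsMPInv P Pp) :
    J * Jp - Jr * Jrp = U * (1 - P * Pp) * Uᵀ := by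
  have hJp_eq : Jp = V * (diagonal d⁻¹ * Uᵀ) :=
    hJp.unique (hJ ▸ ((isMPInv_diagonal d).isometry_mul hU).mul_transpose_isometry hV)
  have hJr_eq : Jr = U * P := by simp only [hJr, hJ, hP, Matrix.mul_assoc]
  have hJrp_eq : Jrp = Pp * Uᵀ := hJrp.unique (hJr_eq ▸ hPp.isometry_mul hU)
  have hdd : diagonal d * diagonal d⁻¹ = 1 := by
    rw [diagonal_mul_diagonal, ← diagonal_one]
    exact congrArg diagonal (funext fun i => mul_inv_cancel₀ (hd i).ne')
  have hJJp : J * Jp = U * Uᵀ := by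
    rw [hJ, hJp_eq]
    simp only [Matrix.mul_assoc]
    rw [← Matrix.mul_assoc Vᵀ, hV, Matrix.one_mul, ← Matrix.mul_assoc (diagonal d), hdd,
      Matrix.one_mul]
  rw [hJJp, hJr_eq, hJrp_eq, Matrix.mul_sub, Matrix.sub_mul, Matrix.mul_one]
  simp only [Matrix.mul_assoc]
end

section
/- Let M ∈ ℝ^{a×m} have full row rank a, N ∈ ℝ^{b×n} have full row rank b, and let A ∈ ℝ^{m×k}, B ∈ ℝ^{n×l} be arbitrary. Form the block matrix P = [ M ⊗ NB | MA ⊗ N ] ∈ ℝ^{ab×(ml+kb)} (⊗ the Kronecker product). Then the column space of P equals (ℝ^a ⊗ col(NB)) + (col(MA) ⊗ ℝ^b), and consequently I_{ab} − P P† = (I_a − Π_{MA}) ⊗ (I_b − Π_{NB}), where Π_X = XX† denotes the orthogonal projection onto the column space of X. -/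
open Matrix
open scoped Kronecker

/-- The tensor product of subspaces `F ⊆ ℝ^a` and `G ⊆ ℝ^b` inside `ℝ^{ab}`
(vectors indexed by pairs), spanned by the elementary tensors `f ⊗ g`. -/
def tensorSub {a b : ℕ} (F : Submodule ℝ (Fin a → ℝ)) (G : Submodule ℝ (Fin b → ℝ)) :
    Submodule ℝ (Fin a × Fin b → ℝ) :=
  Submodule.span ℝ {x | ∃ f ∈ F, ∃ g ∈ G, x = fun p => f p.1 * g p.2}

/-!
With `Π_X = X X†`, put `Q = (1 - Π_{MA}) ⊗ (1 - Π_{NB})`. Then `Q` is symmetric, `Q P = 0` because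
`(1 - Π_X) X = 0`, and `1 - Q = P W` for an explicit `W` built from right inverses of `M` and `N`
and the two pseudoinverses. So `1 - Q` is a symmetric idempotent with the same column space as `P`,
i.e. the orthogonal projection `P P†`. The column-space identity is the same computation on ranges:
`col(X ⊗ Y) = col X ⊗ col Y`, and `col M`, `col N` are everything by full row rank.
-/

namespace Matrix

section

variable {R : Type*} [CommRing R] {l m n p : Type*}

theorem sub_kronecker (A₁ A₂ : Matrix l m R) (B : Matrix n p R) :
    (A₁ - A₂) ⊗ₖ B = A₁ ⊗ₖ B - A₂ ⊗ₖ B :=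
  eq_sub_of_add_eq (by rw [← add_kronecker, sub_add_cancel])

theorem kronecker_sub (A : Matrix l m R) (B₁ B₂ : Matrix n p R) :
    A ⊗ₖ (B₁ - B₂) = A ⊗ₖ B₁ - A ⊗ₖ B₂ :=
  eq_sub_of_add_eq (by rw [← kronecker_add, sub_add_cancel])

theorem range_mulVecLin_fromCols [Fintype m] [Fintype n] (X : Matrix l m R) (Y : Matrix l n R) :
    LinearMap.range (fromCols X Y).mulVecLin
      = LinearMap.range X.mulVecLin ⊔ LinearMap.range Y.mulVecLin := by
  apply le_antisymm
  · rintro _ ⟨v, rfl⟩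
    rw [mulVecLin_apply, ← Sum.elim_comp_inl_inr v, fromCols_mulVec_sumElim]
    exact Submodule.add_mem_sup ⟨_, rfl⟩ ⟨_, rfl⟩
  · refine sup_le ?_ ?_ <;> rintro _ ⟨v, rfl⟩
    · exact ⟨Sum.elim v 0, by simp⟩
    · exact ⟨Sum.elim 0 v, by simp⟩

theorem eq_of_transpose_eq_of_mul_eq_of_mul_eq [Fintype n] {E F : Matrix n n R} (hE : Eᵀ = E)
    (hF : Fᵀ = F) (hFE : F * E = E) (hEF : E * F = F) : E = F :=
  calc E = (F * E)ᵀᵀ := by rw [transpose_transpose, hFE]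
    _ = (E * F)ᵀ := by rw [transpose_mul, hE, hF]
    _ = F := by rw [hEF, hF]

end

section

variable {K : Type*} [Field K] {m n : Type*} [Fintype m] [Fintype n]

theorem range_mulVecLin_eq_top_of_rank_eq (M : Matrix m n K) (hM : M.rank = Fintype.card m) :
    LinearMap.range M.mulVecLin = ⊤ :=
  Submodule.eq_top_of_finrank_eq (by rw [← rank, hM, Module.finrank_fintype_fun_eq_card])

theorem exists_mul_eq_one_of_rank_eq [DecidableEq m] (M : Matrix m n K)
    (hM : M.rank = Fintype.card m) : ∃ Mr : Matrix n m K, M * Mr = 1 := by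
  classical
  obtain ⟨g, hg⟩ :=
    M.mulVecLin.exists_rightInverse_of_surjective (M.range_mulVecLin_eq_top_of_rank_eq hM)
  exact ⟨LinearMap.toMatrix' g, by
    apply Matrix.toLin'.injective
    rw [Matrix.toLin'_mul, Matrix.toLin'_toMatrix', Matrix.toLin'_one]
    exact hg⟩

end

end Matrix

namespace IsMPInv

variable {m n : Type*} [Fintype m] [Fintype n] {A : Matrix m n ℝ} {Ap : Matrix n m ℝ}

theorem one_sub_mul_mul_self [DecidableEq m] (h : IsMPInv A Ap) : (1 - A * Ap) * A = 0 := by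
  rw [Matrix.sub_mul, Matrix.one_mul, h.1, sub_self]

theorem transpose_one_sub [DecidableEq m] (h : IsMPInv A Ap) :
    (1 - A * Ap)ᵀ = 1 - A * Ap := by
  rw [Matrix.transpose_sub, Matrix.transpose_one, h.2.2.1]

theorem one_sub_mul_eq [DecidableEq m] {Q : Matrix m m ℝ} {W : Matrix n m ℝ} (h : IsMPInv A Ap)
    (hQ : Qᵀ = Q) (hQA : Q * A = 0) (hAW : A * W = 1 - Q) : 1 - A * Ap = Q := by
  suffices A * Ap = 1 - Q by rw [this, sub_sub_cancel]
  refine Matrix.eq_of_transpose_eq_of_mul_eq_of_mul_eq h.2.2.1 ?_ ?_ ?_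
  · rw [Matrix.transpose_sub, Matrix.transpose_one, hQ]
  · rw [Matrix.sub_mul, Matrix.one_mul, ← Matrix.mul_assoc, hQA, Matrix.zero_mul, sub_zero]
  · rw [← hAW, ← Matrix.mul_assoc, h.1]

end IsMPInv

theorem range_mulVecLin_kronecker {a b m n : ℕ} (X : Matrix (Fin a) (Fin m) ℝ)
    (Y : Matrix (Fin b) (Fin n) ℝ) :
    LinearMap.range (X ⊗ₖ Y).mulVecLin
      = tensorSub (LinearMap.range X.mulVecLin) (LinearMap.range Y.mulVecLin) := by
  apply le_antisymm
  · rintro _ ⟨v, rfl⟩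
    have hcols : (X ⊗ₖ Y).mulVecLin v
        = ∑ q : Fin m × Fin n, v q • (fun p : Fin a × Fin b => X p.1 q.1 * Y p.2 q.2) := by
      ext p
      simp only [mulVecLin_apply, mulVec, dotProduct, kroneckerMap_apply,
        Finset.sum_apply, Pi.smul_apply, smul_eq_mul]
      exact Finset.sum_congr rfl fun q _ => by ring
    rw [hcols]
    refine Submodule.sum_mem _ fun q _ => Submodule.smul_mem _ _ (Submodule.subset_span ?_)
    exact ⟨fun i => X i q.1, ⟨Pi.single q.1 1, by ext i; simp⟩,
      fun j => Y j q.2, ⟨Pi.single q.2 1, by ext j; simp⟩, rfl⟩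
  · rw [tensorSub, Submodule.span_le]
    rintro _ ⟨f, ⟨u, rfl⟩, g, ⟨w, rfl⟩, rfl⟩
    refine ⟨fun q => u q.1 * w q.2, ?_⟩
    ext p
    simp only [mulVecLin_apply, mulVec, dotProduct, kroneckerMap_apply]
    rw [Finset.sum_mul_sum, ← Finset.sum_product']
    refine Finset.sum_congr rfl fun q _ => by ring

theorem IsMPInv.one_sub_mul_fromCols_kronecker {a b m n k l : Type*} [Fintype a] [Fintype b]
    [Fintype m] [Fintype n] [Fintype k] [Fintype l] [DecidableEq a] [DecidableEq b]
    {M : Matrix a m ℝ} {N : Matrix b n ℝ} {Mr : Matrix m a ℝ} {Nr : Matrix n b ℝ}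
    {A : Matrix m k ℝ} {B : Matrix n l ℝ} {MAp : Matrix k a ℝ} {NBp : Matrix l b ℝ}
    {Pp : Matrix (m × l ⊕ k × n) (a × b) ℝ}
    (hPp : IsMPInv (fromCols (M ⊗ₖ (N * B)) ((M * A) ⊗ₖ N)) Pp)
    (hMr : M * Mr = 1) (hNr : N * Nr = 1)
    (hMAp : IsMPInv (M * A) MAp) (hNBp : IsMPInv (N * B) NBp) :
    1 - fromCols (M ⊗ₖ (N * B)) ((M * A) ⊗ₖ N) * Pp
      = (1 - M * A * MAp) ⊗ₖ (1 - N * B * NBp) := by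
  -- `P * W = (1 - Π_{MA}) ⊗ₖ Π_{NB} + Π_{MA} ⊗ₖ 1`, which is `1 - (1 - Π_{MA}) ⊗ₖ (1 - Π_{NB})`.
  refine hPp.one_sub_mul_eq (W := fromRows ((Mr * (1 - M * A * MAp)) ⊗ₖ NBp) (MAp ⊗ₖ Nr))
    ?_ ?_ ?_
  · rw [← kroneckerMap_transpose, hMAp.transpose_one_sub, hNBp.transpose_one_sub]
  · rw [mul_fromCols, ← mul_kronecker_mul, ← mul_kronecker_mul, hMAp.one_sub_mul_mul_self,
      hNBp.one_sub_mul_mul_self, kronecker_zero, zero_kronecker, fromCols_zero]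
  · rw [fromCols_mul_fromRows, ← mul_kronecker_mul, ← mul_kronecker_mul, ← Matrix.mul_assoc M Mr,
      hMr, Matrix.one_mul, hNr, Matrix.mul_assoc, Matrix.mul_assoc]
    simp only [Matrix.sub_kronecker, Matrix.kronecker_sub, one_kronecker_one]
    abel

/-- For `M` of full row rank `a`, `N` of full row rank `b`, and the block matrix
`P = [ M ⊗ NB | MA ⊗ N ]`, the column space of `P` is `(ℝ^a ⊗ col(NB)) + (col(MA) ⊗ ℝ^b)`,
and `I − PP† = (I − Π_{MA}) ⊗ (I − Π_{NB})`. -/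
theorem lora_tangent_space_kronecker {a b m n k l : ℕ}
    (M : Matrix (Fin a) (Fin m) ℝ) (N : Matrix (Fin b) (Fin n) ℝ)
    (hM : M.rank = a) (hN : N.rank = b)
    (A : Matrix (Fin m) (Fin k) ℝ) (B : Matrix (Fin n) (Fin l) ℝ)
    (P : Matrix (Fin a × Fin b) ((Fin m × Fin l) ⊕ (Fin k × Fin n)) ℝ)
    (hP : P = fromCols (M ⊗ₖ (N * B)) ((M * A) ⊗ₖ N))
    (Pp : Matrix ((Fin m × Fin l) ⊕ (Fin k × Fin n)) (Fin a × Fin b) ℝ)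
    (hPp : IsMPInv P Pp)
    (MAp : Matrix (Fin k) (Fin a) ℝ) (hMAp : IsMPInv (M * A) MAp)
    (NBp : Matrix (Fin l) (Fin b) ℝ) (hNBp : IsMPInv (N * B) NBp) :
    LinearMap.range P.mulVecLin
      = tensorSub ⊤ (LinearMap.range (N * B).mulVecLin)
        ⊔ tensorSub (LinearMap.range (M * A).mulVecLin) ⊤ ∧
    (1 : Matrix (Fin a × Fin b) (Fin a × Fin b) ℝ) - P * Pp
      = (1 - (M * A) * MAp) ⊗ₖ (1 - (N * B) * NBp) := by
  replace hM : M.rank = Fintype.card (Fin a) := by rw [hM, Fintype.card_fin]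
  replace hN : N.rank = Fintype.card (Fin b) := by rw [hN, Fintype.card_fin]
  subst hP
  refine ⟨?_, ?_⟩
  · rw [range_mulVecLin_fromCols, range_mulVecLin_kronecker, range_mulVecLin_kronecker,
      M.range_mulVecLin_eq_top_of_rank_eq hM, N.range_mulVecLin_eq_top_of_rank_eq hN]
  · obtain ⟨Mr, hMr⟩ := M.exists_mul_eq_one_of_rank_eq hM
    obtain ⟨Nr, hNr⟩ := N.exists_mul_eq_one_of_rank_eq hN
    exact hPp.one_sub_mul_fromCols_kronecker hMr hNr hMAp hNBp
end

section
/- Let J ∈ ℝ^{n×(d_in·d_out)} satisfy JᵀJ = S ⊗ T, where S ∈ ℝ^{d_in×d_in} and T ∈ ℝ^{d_out×d_out} are positive semidefinite with thin spectral decompositions S = U_S D_S U_Sᵀ and T = U_T D_T U_Tᵀ (U_S ∈ ℝ^{d_in×r_s}, U_T ∈ ℝ^{d_out×r_t} with orthonormal columns, D_S, D_T diagonal positive definite, r_s = rank S, r_t = rank T). Let A₀ ∈ ℝ^{r×d_in}, B₀ ∈ ℝ^{d_out×r}, and H = [ I_{d_in} ⊗ B₀ | A₀ᵀ ⊗ I_{d_out}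 ]. Then there exists U ∈ ℝ^{n×(r_s r_t)} with orthonormal columns such that J = U (D_S^{1/2} ⊗ D_T^{1/2}) (U_S ⊗ U_T)ᵀ is a thin SVD of J, and JJ† − (JH)(JH)† = U [ (I_{r_s} − Π_{D_S^{1/2} U_Sᵀ A₀ᵀ}) ⊗ (I_{r_t} − Π_{D_T^{1/2} U_Tᵀ B₀}) ] Uᵀ. -/
/-!
With `V = U_S ⊗ U_T` and `Σ = D_S^{1/2} ⊗ D_T^{1/2}` the hypothesis reads `JᵀJ = V (ΣᵀΣ) Vᵀ`.
Since `ker (JᵀJ) = ker J`, this forces `J V Vᵀ = J`, so `U := J V Σ⁻¹` has orthonormal columns and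
`J = U Σ Vᵀ`. Both `JJ†` and `(JH)(JH)†` are then identified through the uniqueness of orthogonal
projections: a symmetric `P` that fixes the columns of a matrix and lies in its column space is
the projection onto that column space. For `JJ†` this gives `U Uᵀ`. For `JH = U M` with
`M = [X ⊗ Y B₀ | X A₀ᵀ ⊗ Y]`, where `X = D_S^{1/2} U_Sᵀ` and `Y = D_T^{1/2} U_Tᵀ` have right
inverses, the projection onto the columns of `M` is
`1 ⊗ Π_B + Π_A ⊗ (1 - Π_B) = 1 - (1 - Π_A) ⊗ (1 - Π_B)`.
-/

open Matrix
open scoped Kronecker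

theorem one_sub_kronecker_one_sub {m n : Type*} [DecidableEq m] [DecidableEq n]
    (P : Matrix m m ℝ) (Q : Matrix n n ℝ) : 1 - (1 - P) ⊗ₖ (1 - Q) = 1 ⊗ₖ Q + P ⊗ₖ (1 - Q) := by
  rw [← one_kronecker_one]
  ext ⟨i, j⟩ ⟨i', j'⟩
  simp only [Matrix.sub_apply, Matrix.add_apply, kroneckerMap_apply]
  ring

section

variable {l m n p : Type*} [Fintype l] [Fintype m] [Fintype n] [Fintype p]

def IsColSpaceProj (P : Matrix m m ℝ) (A : Matrix m n ℝ) : Prop :=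
  Pᵀ = P ∧ P * A = A ∧ ∃ W : Matrix n m ℝ, A * W = P

theorem IsMPInv.isColSpaceProj {A : Matrix m n ℝ} {Ap : Matrix n m ℝ} (h : IsMPInv A Ap) :
    IsColSpaceProj (A * Ap) A :=
  ⟨h.2.2.1, h.1, Ap, rfl⟩

theorem IsMPInv.mul_eq_of_isColSpaceProj {A : Matrix m n ℝ} {Ap : Matrix n m ℝ} {P : Matrix m m ℝ}
    (h : IsMPInv A Ap) (hP : IsColSpaceProj P A) : A * Ap = P := by
  obtain ⟨hPt, hPA, W, hW⟩ := hP
  have hP_eq : A * Ap * P = P := by rw [← hW, ← Matrix.mul_assoc, h.1]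
  calc A * Ap = P * (A * Ap) := by rw [← Matrix.mul_assoc, hPA]
    _ = (A * Ap * P)ᵀ := by rw [transpose_mul, hPt, h.2.2.1]
    _ = P := by rw [hP_eq, hPt]

theorem isColSpaceProj_one_of_mul_eq_one [DecidableEq m] {A : Matrix m n ℝ} {W : Matrix n m ℝ}
    (h : A * W = 1) : IsColSpaceProj 1 A :=
  ⟨transpose_one, Matrix.one_mul A, W, h⟩

theorem IsColSpaceProj.conj [DecidableEq m] {P : Matrix m m ℝ} {A : Matrix m n ℝ}
    {U : Matrix l m ℝ} (hU : Uᵀ * U = 1) (h : IsColSpaceProj P A) :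
    IsColSpaceProj (U * P * Uᵀ) (U * A) := by
  obtain ⟨hPt, hPA, W, hW⟩ := h
  refine ⟨by rw [transpose_mul, transpose_mul, transpose_transpose, hPt, Matrix.mul_assoc],
    ?_, W * Uᵀ, ?_⟩
  · rw [Matrix.mul_assoc, Matrix.mul_assoc, ← Matrix.mul_assoc Uᵀ, hU, Matrix.one_mul, hPA]
  · rw [Matrix.mul_assoc, ← Matrix.mul_assoc A, hW, Matrix.mul_assoc]

theorem IsColSpaceProj.one_sub_kronecker_fromCols [DecidableEq l] [DecidableEq m]
    {l' m' : Type*} [Fintype l'] [Fintype m']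
    {X : Matrix l l' ℝ} {X' : Matrix l' l ℝ} {Y : Matrix m m' ℝ} {Y' : Matrix m' m ℝ}
    {A : Matrix l' n ℝ} {B : Matrix m' p ℝ} {P₁ : Matrix l l ℝ} {P₂ : Matrix m m ℝ}
    (hX : X * X' = 1) (hY : Y * Y' = 1)
    (h₁ : IsColSpaceProj P₁ (X * A)) (h₂ : IsColSpaceProj P₂ (Y * B)) :
    IsColSpaceProj (1 - (1 - P₁) ⊗ₖ (1 - P₂)) (fromCols (X ⊗ₖ (Y * B)) ((X * A) ⊗ₖ Y)) := by
  obtain ⟨hP₁t, hP₁, W₁, hW₁⟩ := h₁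
  obtain ⟨hP₂t, hP₂, W₂, hW₂⟩ := h₂
  have hQ₁ : (1 - P₁) * (X * A) = 0 := by rw [Matrix.sub_mul, Matrix.one_mul, hP₁, sub_self]
  have hQ₂ : (1 - P₂) * (Y * B) = 0 := by rw [Matrix.sub_mul, Matrix.one_mul, hP₂, sub_self]
  refine ⟨?_, ?_, fromRows (X' ⊗ₖ W₂) (W₁ ⊗ₖ (Y' * (1 - P₂))), ?_⟩
  · rw [transpose_sub, transpose_one, ← kroneckerMap_transpose, transpose_sub, transpose_sub,
      transpose_one, transpose_one, hP₁t, hP₂t]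
  · rw [Matrix.sub_mul, Matrix.one_mul, mul_fromCols, ← mul_kronecker_mul, ← mul_kronecker_mul,
      hQ₁, hQ₂, kronecker_zero, zero_kronecker, fromCols_zero, sub_zero]
  · rw [fromCols_mul_fromRows, ← mul_kronecker_mul, ← mul_kronecker_mul, hX, hW₁, hW₂,
      ← Matrix.mul_assoc, hY, Matrix.one_mul, one_sub_kronecker_one_sub]

theorem mul_mul_transpose_eq_self_of_transpose_mul_self_eq [DecidableEq n]
    {J : Matrix l m ℝ} {V : Matrix m n ℝ} {K : Matrix n n ℝ}
    (hV : Vᵀ * V = 1) (hJ : Jᵀ * J = V * K * Vᵀ) : J * (V * Vᵀ) = J := by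
  classical
  have hgram : Jᵀ * J * (1 - V * Vᵀ) = 0 := by
    rw [hJ, Matrix.mul_sub, Matrix.mul_one, Matrix.mul_assoc _ Vᵀ, ← Matrix.mul_assoc Vᵀ, hV,
      Matrix.one_mul, sub_self]
  rw [← conjTranspose_eq_transpose_of_trivial, conjTranspose_mul_self_mul_eq_zero,
    Matrix.mul_sub, Matrix.mul_one, sub_eq_zero] at hgram
  exact hgram.symm

theorem exists_eq_mul_mul_transpose_of_transpose_mul_self_eq [DecidableEq n]
    {J : Matrix l m ℝ} {V : Matrix m n ℝ} {D : Matrix n n ℝ}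
    (hV : Vᵀ * V = 1) (hD : IsUnit D.det) (hJ : Jᵀ * J = V * (Dᵀ * D) * Vᵀ) :
    ∃ U : Matrix l n ℝ, Uᵀ * U = 1 ∧ J = U * D * Vᵀ := by
  refine ⟨J * V * D⁻¹, ?_, ?_⟩
  · have hDt : IsUnit Dᵀ.det := by rwa [det_transpose]
    calc (J * V * D⁻¹)ᵀ * (J * V * D⁻¹) = Dᵀ⁻¹ * (Vᵀ * (Jᵀ * J) * V) * D⁻¹ := by
          rw [transpose_mul, transpose_mul, transpose_nonsing_inv]; simp only [Matrix.mul_assoc]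
      _ = Dᵀ⁻¹ * (Vᵀ * V * (Dᵀ * D) * (Vᵀ * V)) * D⁻¹ := by
          rw [hJ]; simp only [Matrix.mul_assoc]
      _ = 1 := by
          rw [hV, Matrix.one_mul, Matrix.mul_one, ← Matrix.mul_assoc, nonsing_inv_mul _ hDt,
            Matrix.one_mul, mul_nonsing_inv _ hD]
  · rw [Matrix.mul_assoc _ D⁻¹, nonsing_inv_mul _ hD, Matrix.mul_one, Matrix.mul_assoc,
      mul_mul_transpose_eq_self_of_transpose_mul_self_eq hV hJ]

theorem mul_transpose_mul_mul_nonsing_inv [DecidableEq m] [DecidableEq n] {U : Matrix m n ℝ}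
    {D : Matrix n n ℝ} (hU : Uᵀ * U = 1) (hD : IsUnit D.det) : D * Uᵀ * (U * D⁻¹) = 1 := by
  rw [Matrix.mul_assoc, ← Matrix.mul_assoc Uᵀ, hU, Matrix.one_mul, mul_nonsing_inv _ hD]

theorem kronecker_mul_fromCols_one_kronecker_kronecker_one [DecidableEq m] [DecidableEq n]
    {l' m' r s : Type*} (X : Matrix l' m ℝ) (Y : Matrix m' n ℝ) (A : Matrix m r ℝ)
    (B : Matrix n s ℝ) :
    X ⊗ₖ Y * fromCols ((1 : Matrix m m ℝ) ⊗ₖ B) (A ⊗ₖ (1 : Matrix n n ℝ))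
      = fromCols (X ⊗ₖ (Y * B)) ((X * A) ⊗ₖ Y) := by
  rw [mul_fromCols, ← mul_kronecker_mul, ← mul_kronecker_mul, Matrix.mul_one, Matrix.mul_one]

theorem isUnit_det_diagonal_sqrt [DecidableEq n] {d : n → ℝ} (hd : ∀ i, 0 < d i) :
    IsUnit (diagonal fun i => √(d i)).det := by
  rw [det_diagonal, isUnit_iff_ne_zero]
  exact Finset.prod_ne_zero_iff.2 fun i _ => (Real.sqrt_pos.2 (hd i)).ne'

theorem transpose_diagonal_sqrt_mul_self [DecidableEq n] {d : n → ℝ} (hd : ∀ i, 0 ≤ d i) :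
    (diagonal fun i => √(d i))ᵀ * diagonal (fun i => √(d i)) = diagonal d := by
  rw [diagonal_transpose, diagonal_mul_diagonal]
  exact congrArg diagonal (funext fun i => Real.mul_self_sqrt (hd i))

end

/-- K-FAC structure lemma: if `JᵀJ = S ⊗ T` with thin spectral decompositions
`S = U_S D_S U_Sᵀ`, `T = U_T D_T U_Tᵀ`, then `J` admits a thin SVD
`J = U (D_S^{1/2} ⊗ D_T^{1/2})(U_S ⊗ U_T)ᵀ` and, for the LoRA parametrization
`H = [I ⊗ B₀ | A₀ᵀ ⊗ I]`,
`JJ† − (JH)(JH)† = U [(I − Π_{D_S^{1/2}U_SᵀA₀ᵀ}) ⊗ (I − Π_{D_T^{1/2}U_TᵀB₀})] Uᵀ`. -/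
theorem kfac_projection_difference {n din dout rs rt r : ℕ}
    (J : Matrix (Fin n) (Fin din × Fin dout) ℝ)
    (S : Matrix (Fin din) (Fin din) ℝ) (T : Matrix (Fin dout) (Fin dout) ℝ)
    (US : Matrix (Fin din) (Fin rs) ℝ) (UT : Matrix (Fin dout) (Fin rt) ℝ)
    (dS : Fin rs → ℝ) (dT : Fin rt → ℝ)
    (hUS : USᵀ * US = 1) (hUT : UTᵀ * UT = 1)
    (hdS : ∀ i, 0 < dS i) (hdT : ∀ i, 0 < dT i)
    (hS : S = US * diagonal dS * USᵀ) (hT : T = UT * diagonal dT * UTᵀ)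
    (hkfac : Jᵀ * J = S ⊗ₖ T)
    (A₀ : Matrix (Fin r) (Fin din) ℝ) (B₀ : Matrix (Fin dout) (Fin r) ℝ)
    (H : Matrix (Fin din × Fin dout) ((Fin din × Fin r) ⊕ (Fin r × Fin dout)) ℝ)
    (hH : H = fromCols ((1 : Matrix (Fin din) (Fin din) ℝ) ⊗ₖ B₀)
                (A₀ᵀ ⊗ₖ (1 : Matrix (Fin dout) (Fin dout) ℝ)))
    (Jp : Matrix (Fin din × Fin dout) (Fin n) ℝ) (hJp : IsMPInv J Jp)
    (JHp : Matrix ((Fin din × Fin r) ⊕ (Fin r × Fin dout)) (Fin n) ℝ)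
    (hJHp : IsMPInv (J * H) JHp)
    (PAp : Matrix (Fin r) (Fin rs) ℝ)
    (hPAp : IsMPInv (diagonal (fun i => Real.sqrt (dS i)) * USᵀ * A₀ᵀ) PAp)
    (PBp : Matrix (Fin r) (Fin rt) ℝ)
    (hPBp : IsMPInv (diagonal (fun i => Real.sqrt (dT i)) * UTᵀ * B₀) PBp) :
    ∃ U : Matrix (Fin n) (Fin rs × Fin rt) ℝ,
      Uᵀ * U = 1 ∧
      J = U * (diagonal (fun i => Real.sqrt (dS i)) ⊗ₖ diagonal (fun i => Real.sqrt (dT i)))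
            * (US ⊗ₖ UT)ᵀ ∧
      J * Jp - (J * H) * JHp
        = U * (((1 : Matrix (Fin rs) (Fin rs) ℝ)
                  - (diagonal (fun i => Real.sqrt (dS i)) * USᵀ * A₀ᵀ) * PAp)
              ⊗ₖ ((1 : Matrix (Fin rt) (Fin rt) ℝ)
                  - (diagonal (fun i => Real.sqrt (dT i)) * UTᵀ * B₀) * PBp)) * Uᵀ := by
  set σS : Matrix (Fin rs) (Fin rs) ℝ := diagonal fun i => √(dS i)
  set σT : Matrix (Fin rt) (Fin rt) ℝ := diagonal fun i => √(dT i)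
  have hσS : IsUnit σS.det := isUnit_det_diagonal_sqrt hdS
  have hσT : IsUnit σT.det := isUnit_det_diagonal_sqrt hdT
  have hD : IsUnit (σS ⊗ₖ σT).det := by
    rw [det_kronecker]
    exact (hσS.pow _).mul (hσT.pow _)
  have hV : (US ⊗ₖ UT)ᵀ * (US ⊗ₖ UT) = 1 := by
    rw [← kroneckerMap_transpose, ← mul_kronecker_mul, hUS, hUT, one_kronecker_one]
  have hgram : Jᵀ * J = US ⊗ₖ UT * ((σS ⊗ₖ σT)ᵀ * (σS ⊗ₖ σT)) * (US ⊗ₖ UT)ᵀ := by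
    rw [hkfac, hS, hT, ← kroneckerMap_transpose, ← kroneckerMap_transpose, ← mul_kronecker_mul,
      transpose_diagonal_sqrt_mul_self fun i => (hdS i).le,
      transpose_diagonal_sqrt_mul_self fun i => (hdT i).le, ← mul_kronecker_mul,
      ← mul_kronecker_mul]
  obtain ⟨U, hU, hJ⟩ := exists_eq_mul_mul_transpose_of_transpose_mul_self_eq hV hD hgram
  have hJJp : J * Jp = U * Uᵀ := hJp.mul_eq_of_isColSpaceProj <| by
    rw [hJ, Matrix.mul_assoc U]
    simpa only [Matrix.mul_one] using
      (isColSpaceProj_one_of_mul_eq_one (mul_transpose_mul_mul_nonsing_inv hV hD)).conj hU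
  have hJHJHp := hJHp.mul_eq_of_isColSpaceProj <| by
    rw [hJ, hH, Matrix.mul_assoc U, Matrix.mul_assoc U, ← kroneckerMap_transpose,
      ← mul_kronecker_mul, kronecker_mul_fromCols_one_kronecker_kronecker_one]
    exact (IsColSpaceProj.one_sub_kronecker_fromCols (mul_transpose_mul_mul_nonsing_inv hUS hσS)
      (mul_transpose_mul_mul_nonsing_inv hUT hσT) hPAp.isColSpaceProj hPBp.isColSpaceProj).conj hU
  refine ⟨U, hU, hJ, ?_⟩
  rw [hJJp, hJHJHp, Matrix.mul_sub, Matrix.mul_one, Matrix.sub_mul, sub_sub_cancel]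
end

section
/- Assume J ∈ ℝ^{n×(d_in·d_out)} satisfies JᵀJ = S ⊗ T with thin spectral decompositions S = U_S D_S U_Sᵀ (rank r_s) and T = U_T D_T U_Tᵀ (rank r_t) as above. Let z ∈ ℝⁿ, let G ∈ ℝ^{d_out×d_in} be the matrix with vec(G) = −Jᵀz (the loss gradient at the pretrained point), and define the whitened gradient F := D_T^{−1/2} U_Tᵀ G U_S D_S^{−1/2} ∈ ℝ^{r_t×r_s}. Then for any A₀ ∈ ℝ^{r×d_in}, B₀ ∈ ℝ^{d_out×r} and H = [ I ⊗ B₀ | A₀ᵀ ⊗ I ]: ‖(JJ† − (JH)(JH)†) z‖₂ = ‖(I_{r_t} − Π_{D_T^{1/2} U_Tᵀ B₀}) F (I_{r_s} − Π_{D_S^{1/2} U_Sᵀ A₀ᵀ})‖_F ≥ ( Σ_{i ≥ 2r+1} s_i(F)² )^{1/2}, where s_1(F) ≥ s_2(F) ≥ … are the singular values of F. -/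
/-!
For any `M` with pseudoinverse `M†`, `z ⬝ M M† z = ‖z‖² - min_x ‖z - M x‖²`. Writing
`S = Ω_Sᵀ Ω_S` and `T = Ω_Tᵀ Ω_T` with `Ω = D^{1/2} Uᵀ`, the K-FAC structure turns the residual of
an update `W` into `‖z‖² - ‖F‖_F² + ‖F + Ω_T W Ω_Sᵀ‖_F²`. Over all `W` the last term has minimum
`0`; over LoRA updates `B₀ A + B A₀` it becomes `‖F + P X + Y Qᵀ‖_F²` with `P = Ω_T B₀`,
`Q = Ω_S A₀ᵀ` and `X`, `Y` free, minimised by `(1 - Π_P) F (1 - Π_Q)`. As the range of `J H` lies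
in that of `J`, `J J† - (J H)(J H)†` is an orthogonal projection and its quadratic form is the
difference of the two minima. Finally `F - (1 - Π_P) F (1 - Π_Q) = P (P† F) + ((1 - Π_P) F Q†ᵀ) Qᵀ`
has rank at most `2r`, and the error of a rank-`2r` approximation of `F` is at least the tail of
the singular values of `F`.
-/

open Matrix
open scoped Kronecker

/-- Euclidean norm of a vector. -/
noncomputable def enorm {ι : Type*} [Fintype ι] (v : ι → ℝ) : ℝ :=
  Real.sqrt (∑ i, v i ^ 2)

/-- Frobenius norm of a matrix. -/
noncomputable def frobNorm {ι κ : Type*} [Fintype ι] [Fintype κ] (A : Matrix ι κ ℝ) : ℝ :=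
  Real.sqrt (∑ i, ∑ j, A i j ^ 2)

section Frobenius
variable {ι m n : Type*} [Fintype ι] [Fintype m] [Fintype n]

lemma dotProduct_self_nonneg (v : ι → ℝ) : 0 ≤ v ⬝ᵥ v :=
  Finset.sum_nonneg fun i _ => mul_self_nonneg (v i)

lemma dotProduct_add_self (u v : ι → ℝ) :
    (u + v) ⬝ᵥ (u + v) = u ⬝ᵥ u + 2 * (u ⬝ᵥ v) + v ⬝ᵥ v := by
  simp only [add_dotProduct, dotProduct_add, dotProduct_comm v u]
  ring

lemma mulVec_dotProduct_mulVec (A : Matrix m n ℝ) (v w : n → ℝ) :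
    (A *ᵥ v) ⬝ᵥ (A *ᵥ w) = v ⬝ᵥ ((Aᵀ * A) *ᵥ w) := by
  rw [← mulVec_mulVec, dotProduct_mulVec v Aᵀ, vecMul_transpose]

lemma frobNorm_eq_sqrt_trace (A : Matrix m n ℝ) : frobNorm A = √((Aᵀ * A).trace) := by
  rw [frobNorm, ← vec_dotProduct_vec, dotProduct, Fintype.sum_prod_type, Finset.sum_comm]
  simp only [vec, sq]

lemma enorm_eq_sqrt_dotProduct (v : ι → ℝ) : _root_.enorm v = √(v ⬝ᵥ v) := by
  simp only [_root_.enorm, dotProduct, sq]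

lemma trace_transpose_mul_self_nonneg (A : Matrix m n ℝ) : 0 ≤ (Aᵀ * A).trace :=
  vec_dotProduct_vec A A ▸ dotProduct_self_nonneg _

lemma trace_transpose_mul_self_add (A B : Matrix m n ℝ) :
    ((A + B)ᵀ * (A + B)).trace = (Aᵀ * A).trace + 2 * (Aᵀ * B).trace + (Bᵀ * B).trace := by
  simp only [← vec_dotProduct_vec, vec_add, dotProduct_add_self]

end Frobenius

namespace IsMPInv
variable {m n : Type*} [Fintype m] [Fintype n] {M : Matrix m n ℝ} {Mp : Matrix n m ℝ}

lemma transpose_mul_proj (h : IsMPInv M Mp) : Mᵀ * (M * Mp) = Mᵀ := by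
  rw [← h.2.2.1, ← transpose_mul, h.1]

lemma one_sub_proj_mul [DecidableEq m] (h : IsMPInv M Mp) : (1 - M * Mp) * M = 0 := by
  rw [Matrix.sub_mul, Matrix.one_mul, h.1, sub_self]

lemma transpose_mul_one_sub_proj [DecidableEq m] (h : IsMPInv M Mp) : Mᵀ * (1 - M * Mp) = 0 := by
  rw [Matrix.mul_sub, Matrix.mul_one, h.transpose_mul_proj, sub_self]

lemma proj_eq_transpose_mul_transpose (h : IsMPInv M Mp) : M * Mp = Mpᵀ * Mᵀ := by
  rw [← transpose_mul, h.2.2.1]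

lemma dotProduct_proj_eq_of_isLeast (h : IsMPInv M Mp) (z : m → ℝ) {e : ℝ}
    (he : IsLeast (Set.range fun x => (z - M *ᵥ x) ⬝ᵥ (z - M *ᵥ x)) e) :
    z ⬝ᵥ ((M * Mp) *ᵥ z) = z ⬝ᵥ z - e := by
  set u := z - (M * Mp) *ᵥ z
  have hu : ∀ y, u ⬝ᵥ (M *ᵥ y) = 0 := fun y => by
    rw [dotProduct_mulVec, ← mulVec_transpose, mulVec_sub, mulVec_mulVec, h.transpose_mul_proj,
      sub_self, zero_dotProduct]
  have hleast : IsLeast (Set.range fun x => (z - M *ᵥ x) ⬝ᵥ (z - M *ᵥ x)) (u ⬝ᵥ u) := by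
    refine ⟨⟨Mp *ᵥ z, by simp only [mulVec_mulVec, u]⟩, ?_⟩
    rintro _ ⟨x, rfl⟩
    have hsplit : z - M *ᵥ x = u + M *ᵥ (Mp *ᵥ z - x) := by
      simp only [u, mulVec_sub, mulVec_mulVec]; abel
    simp only [hsplit, dotProduct_add_self, hu, mul_zero, add_zero]
    linarith [dotProduct_self_nonneg (M *ᵥ (Mp *ᵥ z - x))]
  have huu : u ⬝ᵥ u = z ⬝ᵥ z - z ⬝ᵥ ((M * Mp) *ᵥ z) := by
    have := hu (Mp *ᵥ z)
    rw [mulVec_mulVec] at this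
    calc u ⬝ᵥ u = u ⬝ᵥ z - u ⬝ᵥ ((M * Mp) *ᵥ z) := dotProduct_sub _ _ _
      _ = z ⬝ᵥ z - z ⬝ᵥ ((M * Mp) *ᵥ z) := by
        rw [this, sub_zero, sub_dotProduct, dotProduct_comm ((M * Mp) *ᵥ z)]
  linarith [he.unique hleast]

lemma dotProduct_proj_eq_of_surjective {α : Type*} (h : IsMPInv M Mp) (z : m → ℝ)
    {g : α → n → ℝ} (hg : Function.Surjective g) {φ : α → ℝ} {c e : ℝ}
    (hφ : ∀ x, (z - M *ᵥ g x) ⬝ᵥ (z - M *ᵥ g x) = c + φ x) (he : IsLeast (Set.range φ) e) :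
    z ⬝ᵥ ((M * Mp) *ᵥ z) = z ⬝ᵥ z - (c + e) := by
  refine h.dotProduct_proj_eq_of_isLeast z ?_
  rw [← hg.range_comp]
  obtain ⟨⟨x, hx⟩, hle⟩ := he
  refine ⟨⟨x, by simp only [Function.comp_apply, hφ, hx]⟩, ?_⟩
  rintro _ ⟨y, rfl⟩
  simp only [Function.comp_apply, hφ]
  linarith [hle ⟨y, rfl⟩]

lemma dotProduct_proj_sub_proj {p : Type*} [Fintype p] [DecidableEq m]
    {J : Matrix m n ℝ} {Jp : Matrix n m ℝ} {H : Matrix n p ℝ} {K : Matrix p m ℝ}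
    (hJ : IsMPInv J Jp) (hK : IsMPInv (J * H) K) (z : m → ℝ) :
    ((J * Jp - J * H * K) *ᵥ z) ⬝ᵥ ((J * Jp - J * H * K) *ᵥ z)
      = z ⬝ᵥ ((J * Jp) *ᵥ z) - z ⬝ᵥ ((J * H * K) *ᵥ z) := by
  have h₁ : J * Jp * (J * H * K) = J * H * K := by
    simp only [← Matrix.mul_assoc, hJ.1]
  have h₂ : J * H * K * (J * Jp) = J * H * K := by
    rw [← hK.2.2.1, ← hJ.2.2.1, ← transpose_mul, h₁]
  have hidem : (J * Jp - J * H * K)ᵀ * (J * Jp - J * H * K) = J * Jp - J * H * K := by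
    have hJJ : J * Jp * (J * Jp) = J * Jp := by rw [← Matrix.mul_assoc, hJ.1]
    have hKK : J * H * K * (J * H * K) = J * H * K := by rw [← Matrix.mul_assoc, hK.1]
    rw [transpose_sub, hJ.2.2.1, hK.2.2.1, sub_mul, mul_sub, mul_sub, hJJ, hKK, h₁, h₂]
    abel
  rw [mulVec_dotProduct_mulVec, hidem, sub_mulVec, dotProduct_sub]

end IsMPInv

lemma Matrix.rank_mul_add_mul_le {R m n k l : Type*} [CommRing R] [StrongRankCondition R]
    [Fintype n] [Fintype k] [Fintype l]
    (A : Matrix m k R) (X : Matrix k n R) (Y : Matrix m l R) (B : Matrix l n R) :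
    (A * X + Y * B).rank ≤ Fintype.card k + Fintype.card l := by
  rw [← fromCols_mul_fromRows]
  exact (rank_mul_le_left _ _).trans ((rank_le_card_width _).trans_eq (Fintype.card_sum ..))

section TwoSidedLeastSquares
variable {m n k l : Type*} [Fintype m] [Fintype n] [Fintype k] [Fintype l]
  [DecidableEq m] [DecidableEq n]
  {P : Matrix m k ℝ} {Pp : Matrix k m ℝ} {Q : Matrix n l ℝ} {Qp : Matrix l n ℝ}

lemma sub_one_sub_proj_mul_mul_one_sub_proj (hQ : IsMPInv Q Qp) (F : Matrix m n ℝ) :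
    F - (1 - P * Pp) * F * (1 - Q * Qp) = P * (Pp * F) + ((1 - P * Pp) * F * Qpᵀ) * Qᵀ := by
  rw [hQ.proj_eq_transpose_mul_transpose]
  simp only [Matrix.mul_sub, Matrix.sub_mul, Matrix.mul_one, Matrix.one_mul, Matrix.mul_assoc]
  abel

/-- The doubly projected matrix `(1 - Π_P) F (1 - Π_Q)` is Frobenius-orthogonal to every
`P X + Y Qᵀ`. -/
lemma isLeast_frob_add_mul_add_mul (hP : IsMPInv P Pp) (hQ : IsMPInv Q Qp) (F : Matrix m n ℝ) :
    IsLeast (Set.range fun XY : Matrix k n ℝ × Matrix m l ℝ =>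
        ((F + P * XY.1 + XY.2 * Qᵀ)ᵀ * (F + P * XY.1 + XY.2 * Qᵀ)).trace)
      (((1 - P * Pp) * F * (1 - Q * Qp))ᵀ * ((1 - P * Pp) * F * (1 - Q * Qp))).trace := by
  set R := (1 - P * Pp) * F * (1 - Q * Qp)
  have hPR : Pᵀ * R = 0 := by
    simp only [R, ← Matrix.mul_assoc, hP.transpose_mul_one_sub_proj, Matrix.zero_mul]
  have hRP : Rᵀ * P = 0 := by
    rw [← transpose_transpose (Rᵀ * P), transpose_mul, transpose_transpose, hPR, transpose_zero]
  have hRQ : R * Q = 0 := by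
    simp only [R, Matrix.mul_assoc, hQ.one_sub_proj_mul, Matrix.mul_zero]
  have horth (X : Matrix k n ℝ) (Y : Matrix m l ℝ) : (Rᵀ * (P * X + Y * Qᵀ)).trace = 0 := by
    rw [Matrix.mul_add, trace_add, ← Matrix.mul_assoc, hRP, Matrix.zero_mul, trace_zero,
      zero_add, ← Matrix.mul_assoc, trace_mul_comm, ← Matrix.mul_assoc, ← transpose_mul, hRQ,
      transpose_zero, Matrix.zero_mul, trace_zero]
  have hsplit : F - R = _ := sub_one_sub_proj_mul_mul_one_sub_proj hQ F
  refine ⟨⟨(-(Pp * F), -((1 - P * Pp) * F * Qpᵀ)), ?_⟩, ?_⟩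
  · simp only [Matrix.mul_neg, Matrix.neg_mul, ← sub_eq_add_neg, sub_sub, ← hsplit, sub_sub_cancel]
  · rintro _ ⟨⟨X, Y⟩, rfl⟩
    have hF : F + P * X + Y * Qᵀ
        = R + (P * (X + Pp * F) + (Y + (1 - P * Pp) * F * Qpᵀ) * Qᵀ) := by
      rw [← sub_eq_iff_eq_add', show F + P * X + Y * Qᵀ - R = F - R + P * X + Y * Qᵀ by abel,
        hsplit]
      simp only [Matrix.mul_add, Matrix.add_mul]
      abel
    dsimp only
    rw [hF, trace_transpose_mul_self_add, horth, mul_zero, add_zero]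
    linarith [trace_transpose_mul_self_nonneg
      (P * (X + Pp * F) + (Y + (1 - P * Pp) * F * Qpᵀ) * Qᵀ)]

end TwoSidedLeastSquares

section KFAC
variable {ι a b : Type*} [Fintype ι] [Fintype a] [Fintype b]
  {J : Matrix ι (a × b) ℝ} {S : Matrix a a ℝ} {T : Matrix b b ℝ} {z : ι → ℝ} {G : Matrix b a ℝ}

lemma dotProduct_sub_mulVec_vec_self (hkfac : Jᵀ * J = S ⊗ₖ T) (hG : Jᵀ *ᵥ z = -vec G)
    (W : Matrix b a ℝ) :
    (z - J *ᵥ vec W) ⬝ᵥ (z - J *ᵥ vec W)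
      = z ⬝ᵥ z + 2 * (Gᵀ * W).trace + (Wᵀ * (T * W * Sᵀ)).trace := by
  have hcross : z ⬝ᵥ (J *ᵥ vec W) = -(Gᵀ * W).trace := by
    rw [dotProduct_mulVec, ← mulVec_transpose, hG, neg_dotProduct, vec_dotProduct_vec]
  have hquad : (J *ᵥ vec W) ⬝ᵥ (J *ᵥ vec W) = (Wᵀ * (T * W * Sᵀ)).trace := by
    rw [mulVec_dotProduct_mulVec, hkfac, kronecker_mulVec_vec, vec_dotProduct_vec]
  rw [sub_eq_add_neg, dotProduct_add_self, dotProduct_neg, neg_dotProduct, dotProduct_neg,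
    neg_neg, hcross, hquad]
  ring

/-- Because `Jᵀ = Jᵀ J J†`, the gradient `Jᵀ z` lies in the range of `S ⊗ T`. -/
lemma exists_eq_mul_mul_transpose_of_kronecker {Jp : Matrix (a × b) ι ℝ} (hJ : IsMPInv J Jp)
    (hkfac : Jᵀ * J = S ⊗ₖ T) (hG : Jᵀ *ᵥ z = -vec G) : ∃ Y : Matrix b a ℝ, G = T * Y * Sᵀ := by
  obtain ⟨Y, hY⟩ := vec_bijective.surjective (Jp *ᵥ z)
  refine ⟨-Y, vec_inj.mp ?_⟩
  rw [Matrix.mul_neg, Matrix.neg_mul, vec_neg, ← kronecker_mulVec_vec, ← hkfac, hY, mulVec_mulVec,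
    Matrix.mul_assoc, hJ.transpose_mul_proj, hG, neg_neg]

end KFAC

section Whitening
variable {ι a b p q : Type*} [Fintype ι] [Fintype a] [Fintype b] [Fintype p] [Fintype q]

lemma dotProduct_sub_mulVec_vec_self_eq_whitened {J : Matrix ι (a × b) ℝ}
    {Ωa : Matrix p a ℝ} {Ωb : Matrix q b ℝ} {F : Matrix q p ℝ} {z : ι → ℝ}
    (hkfac : Jᵀ * J = (Ωaᵀ * Ωa) ⊗ₖ (Ωbᵀ * Ωb)) (hG : Jᵀ *ᵥ z = -vec (Ωbᵀ * F * Ωa))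
    (W : Matrix b a ℝ) :
    (z - J *ᵥ vec W) ⬝ᵥ (z - J *ᵥ vec W)
      = z ⬝ᵥ z - (Fᵀ * F).trace + ((F + Ωb * W * Ωaᵀ)ᵀ * (F + Ωb * W * Ωaᵀ)).trace := by
  have hcross : ((Ωbᵀ * F * Ωa)ᵀ * W).trace = (Fᵀ * (Ωb * W * Ωaᵀ)).trace := by
    simp only [transpose_mul, transpose_transpose, Matrix.mul_assoc]
    rw [trace_mul_comm]
    simp only [Matrix.mul_assoc]
  have hquad : (Wᵀ * (Ωbᵀ * Ωb * W * (Ωaᵀ * Ωa)ᵀ)).trace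
      = ((Ωb * W * Ωaᵀ)ᵀ * (Ωb * W * Ωaᵀ)).trace := by
    simp only [transpose_mul, transpose_transpose, ← Matrix.mul_assoc]
    rw [trace_mul_comm]
    simp only [Matrix.mul_assoc]
  rw [dotProduct_sub_mulVec_vec_self hkfac hG, hcross, hquad, trace_transpose_mul_self_add]
  ring

variable [DecidableEq p] [DecidableEq q]

/-- `Ωbᵀ (·) Ωa` undoes `Λb (·) Λaᵀ` on the range of `Jᵀ J`, which contains the gradient. -/
lemma eq_transpose_mul_mul_mul_of_kronecker {J : Matrix ι (a × b) ℝ} {Jp : Matrix (a × b) ι ℝ}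
    {Ωa Λa : Matrix p a ℝ} {Ωb Λb : Matrix q b ℝ} {z : ι → ℝ} {G : Matrix b a ℝ}
    (hJ : IsMPInv J Jp) (hkfac : Jᵀ * J = (Ωaᵀ * Ωa) ⊗ₖ (Ωbᵀ * Ωb)) (hG : Jᵀ *ᵥ z = -vec G)
    (hΛa : Λa * Ωaᵀ = 1) (hΛb : Λb * Ωbᵀ = 1) :
    G = Ωbᵀ * (Λb * G * Λaᵀ) * Ωa := by
  obtain ⟨Y, hY⟩ := exists_eq_mul_mul_transpose_of_kronecker hJ hkfac hG
  have hΩΛa : Ωa * Λaᵀ = 1 := by rw [← transpose_transpose Ωa, ← transpose_mul, hΛa, transpose_one]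
  conv_rhs => rw [hY]
  simp only [transpose_mul, transpose_transpose, ← Matrix.mul_assoc, hY]
  simp only [Matrix.mul_assoc, hΩΛa, Matrix.mul_one]
  simp only [← Matrix.mul_assoc, hΛb, Matrix.mul_one]

end Whitening

section SqrtFactor
variable {a p : Type*} [Fintype p] [DecidableEq p] (U : Matrix a p ℝ) {d : p → ℝ}

lemma transpose_mul_self_diagonal_sqrt_mul_transpose (hd : ∀ i, 0 ≤ d i) :
    (diagonal (fun i => √(d i)) * Uᵀ)ᵀ * (diagonal (fun i => √(d i)) * Uᵀ)
      = U * diagonal d * Uᵀ := by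
  rw [transpose_mul, diagonal_transpose, transpose_transpose, Matrix.mul_assoc,
    ← Matrix.mul_assoc (diagonal _), diagonal_mul_diagonal, ← Matrix.mul_assoc]
  simp only [Real.mul_self_sqrt (hd _)]

lemma diagonal_inv_sqrt_mul_transpose_mul_transpose [Fintype a] (hU : Uᵀ * U = 1)
    (hd : ∀ i, 0 < d i) :
    (diagonal (fun i => (√(d i))⁻¹) * Uᵀ) * (diagonal (fun i => √(d i)) * Uᵀ)ᵀ = 1 := by
  rw [transpose_mul, diagonal_transpose, transpose_transpose, Matrix.mul_assoc,
    ← Matrix.mul_assoc Uᵀ, hU, Matrix.one_mul, diagonal_mul_diagonal, ← diagonal_one]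
  exact congrArg diagonal (funext fun i => inv_mul_cancel₀ (Real.sqrt_pos.mpr (hd i)).ne')

end SqrtFactor

section LoRA
variable {a b r : Type*}

lemma surjective_sumElim_vec :
    Function.Surjective fun AB : Matrix r a ℝ × Matrix b r ℝ => Sum.elim (vec AB.1) (vec AB.2) := by
  intro x
  obtain ⟨A, hA⟩ := vec_bijective.surjective (x ∘ Sum.inl)
  obtain ⟨B, hB⟩ := vec_bijective.surjective (x ∘ Sum.inr)
  exact ⟨(A, B), by simp only [hA, hB, Sum.elim_comp_inl_inr]⟩

variable [Fintype a] [Fintype b] [Fintype r]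

lemma fromCols_kronecker_mulVec_sumElim_vec [DecidableEq a] [DecidableEq b]
    (A₀ A : Matrix r a ℝ) (B₀ B : Matrix b r ℝ) :
    fromCols ((1 : Matrix a a ℝ) ⊗ₖ B₀) (A₀ᵀ ⊗ₖ (1 : Matrix b b ℝ)) *ᵥ Sum.elim (vec A) (vec B)
      = vec (B₀ * A + B * A₀) := by
  rw [fromCols_mulVec_sumElim, kronecker_mulVec_vec, kronecker_mulVec_vec, vec_add]
  simp only [transpose_one, Matrix.mul_one, Matrix.one_mul, transpose_transpose]

variable {p q : Type*} [Fintype p] [Fintype q] [DecidableEq p] [DecidableEq q]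
  {Ωa Λa : Matrix p a ℝ} {Ωb Λb : Matrix q b ℝ}

lemma isLeast_frob_add_whiten (hΛa : Λa * Ωaᵀ = 1) (hΛb : Λb * Ωbᵀ = 1) (F : Matrix q p ℝ) :
    IsLeast (Set.range fun W : Matrix b a ℝ =>
      ((F + Ωb * W * Ωaᵀ)ᵀ * (F + Ωb * W * Ωaᵀ)).trace) 0 := by
  have hΩΛb : Ωb * Λbᵀ = 1 := by rw [← transpose_transpose Ωb, ← transpose_mul, hΛb, transpose_one]
  refine ⟨⟨-(Λbᵀ * F * Λa), ?_⟩, ?_⟩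
  · simp only [Matrix.mul_neg, Matrix.neg_mul, ← Matrix.mul_assoc, hΩΛb, Matrix.one_mul]
    simp only [Matrix.mul_assoc, hΛa, Matrix.mul_one, add_neg_cancel, Matrix.mul_zero, trace_zero]
  · rintro _ ⟨W, rfl⟩
    exact trace_transpose_mul_self_nonneg _

lemma isLeast_frob_add_whiten_lora (hΛa : Λa * Ωaᵀ = 1) (hΛb : Λb * Ωbᵀ = 1)
    {A₀ : Matrix r a ℝ} {B₀ : Matrix b r ℝ} {PAp : Matrix r p ℝ} {PBp : Matrix r q ℝ}
    (hPA : IsMPInv (Ωa * A₀ᵀ) PAp) (hPB : IsMPInv (Ωb * B₀) PBp) (F : Matrix q p ℝ) :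
    IsLeast (Set.range fun AB : Matrix r a ℝ × Matrix b r ℝ =>
        ((F + Ωb * (B₀ * AB.1 + AB.2 * A₀) * Ωaᵀ)ᵀ
          * (F + Ωb * (B₀ * AB.1 + AB.2 * A₀) * Ωaᵀ)).trace)
      (((1 - Ωb * B₀ * PBp) * F * (1 - Ωa * A₀ᵀ * PAp))ᵀ
        * ((1 - Ωb * B₀ * PBp) * F * (1 - Ωa * A₀ᵀ * PAp))).trace := by
  have hΩΛb : Ωb * Λbᵀ = 1 := by rw [← transpose_transpose Ωb, ← transpose_mul, hΛb, transpose_one]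
  have hsurj :
      Function.Surjective fun AB : Matrix r a ℝ × Matrix b r ℝ => (AB.1 * Ωaᵀ, Ωb * AB.2) :=
    fun XY => ⟨(XY.1 * Λa, Λbᵀ * XY.2), by
      simp only [Matrix.mul_assoc, hΛa, Matrix.mul_one, ← Matrix.mul_assoc Ωb, hΩΛb,
        Matrix.one_mul]⟩
  have h := hsurj.range_comp _ ▸ isLeast_frob_add_mul_add_mul hPB hPA F
  convert h using 4 with AB
  simp only [Function.comp_apply, transpose_mul, transpose_transpose, Matrix.mul_add,
    Matrix.add_mul, Matrix.mul_assoc, add_assoc]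

end LoRA

open Finset in
/-- Termwise `a t * (d k - [t ≤ k]) ≤ a k * (d k - [t ≤ k])`, and the left-hand sides sum to
`a t * (∑ d - (n - t)) ≥ 0`. -/
lemma sum_Ico_le_sum_mul_of_sub_le_sum {a d : ℕ → ℝ} {t n : ℕ} (ha : Antitone a) (ht : 0 ≤ a t)
    (hd0 : ∀ k, 0 ≤ d k) (hd1 : ∀ k, d k ≤ 1) (hsum : ((n - t : ℕ) : ℝ) ≤ ∑ k ∈ range n, d k) :
    ∑ k ∈ Ico t n, a k ≤ ∑ k ∈ range n, a k * d k := by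
  set ind : ℕ → ℝ := fun k => if t ≤ k then 1 else 0
  have hfilter : {k ∈ range n | t ≤ k} = Ico t n := by
    ext k; simp only [mem_filter, mem_range, mem_Ico, and_comm]
  have hind : ∑ k ∈ range n, ind k = ((n - t : ℕ) : ℝ) := by
    rw [sum_boole, hfilter, Nat.card_Ico]
  have htail : ∑ k ∈ Ico t n, a k = ∑ k ∈ range n, a k * ind k := by
    simp only [ind, mul_ite, mul_one, mul_zero, ← sum_filter, hfilter]
  have hthreshold : ∀ k, a t * (d k - ind k) ≤ a k * (d k - ind k) := fun k => by
    by_cases htk : t ≤ k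
    · exact mul_le_mul_of_nonpos_right (ha htk) (by simp only [ind, if_pos htk]; linarith [hd1 k])
    · exact mul_le_mul_of_nonneg_right (ha (not_le.mp htk).le)
        (by simp only [ind, if_neg htk, sub_zero]; exact hd0 k)
  have hmass : 0 ≤ a t * ∑ k ∈ range n, (d k - ind k) :=
    mul_nonneg ht (by rw [sum_sub_distrib, hind]; linarith)
  have hle := hmass.trans ((mul_sum _ _ _).trans_le (sum_le_sum fun k _ => hthreshold k))
  simp only [mul_sub, sum_sub_distrib] at hle
  linarith

section Bessel
variable {ι m n : Type*} [Fintype ι] [Fintype m] [Fintype n] {u : ι → EuclideanSpace ℝ n}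

lemma Orthonormal.sum_mulVec_dotProduct_le_trace (hu : Orthonormal ℝ u) (N : Matrix m n ℝ) :
    ∑ k, (N *ᵥ (u k).ofLp) ⬝ᵥ (N *ᵥ (u k).ofLp) ≤ (Nᵀ * N).trace := by
  have hrow : (Nᵀ * N).trace = ∑ i, ‖(WithLp.toLp 2 (N i) : EuclideanSpace ℝ n)‖ ^ 2 := by
    simp only [EuclideanSpace.real_norm_sq_eq, ← vec_dotProduct_vec, dotProduct, vec,
      Fintype.sum_prod_type]
    simp only [sq]
    exact Finset.sum_comm
  have hinner : ∀ k i, (N *ᵥ (u k).ofLp) i = inner ℝ (u k) (WithLp.toLp 2 (N i)) := fun k i => by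
    simp only [mulVec, EuclideanSpace.inner_eq_star_dotProduct, star_trivial]
  rw [hrow]
  simp only [dotProduct, hinner, ← sq]
  rw [Finset.sum_comm]
  refine Finset.sum_le_sum fun i _ => ?_
  simpa only [Real.norm_eq_abs, sq_abs] using
    hu.sum_inner_products_le (s := Finset.univ) (WithLp.toLp 2 (N i))

lemma Orthonormal.sum_sq_apply_le_one (hu : Orthonormal ℝ u) (j : n) : ∑ k, u k j ^ 2 ≤ 1 := by
  classical
  simpa only [EuclideanSpace.inner_single_right, one_mul, conj_trivial, Real.norm_eq_abs, sq_abs,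
    PiLp.norm_single, norm_one, one_pow] using
    hu.sum_inner_products_le (s := Finset.univ) (EuclideanSpace.single j (1 : ℝ))

lemma Orthonormal.sum_sum_sq_apply (hu : Orthonormal ℝ u) :
    ∑ j, ∑ k, u k j ^ 2 = Fintype.card ι := by
  rw [Finset.sum_comm]
  simp only [← EuclideanSpace.real_norm_sq_eq, hu.1, one_pow, Finset.sum_const, Finset.card_univ,
    nsmul_eq_mul, mul_one]

end Bessel

def rectDiagonal (rt rs : ℕ) (s : ℕ → ℝ) : Matrix (Fin rt) (Fin rs) ℝ :=
  of fun i j => if (i : ℕ) = j then s i else 0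

lemma transpose_mul_self_rectDiagonal (rt rs : ℕ) (s : ℕ → ℝ) :
    (rectDiagonal rt rs s)ᵀ * rectDiagonal rt rs s
      = diagonal fun j : Fin rs => if (j : ℕ) < rt then s j ^ 2 else 0 := by
  ext a b
  rw [mul_apply, diagonal_apply]
  simp only [transpose_apply, rectDiagonal, of_apply]
  rw [Fin.sum_univ_eq_sum_range (fun i => (if i = a then s i else 0) * (if i = b then s i else 0))]
  simp only [ite_mul, zero_mul, Finset.sum_ite_eq', Finset.mem_range, ← Fin.val_inj]
  split_ifs <;> simp_all [sq]

open Finset in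
/-- Test the error against an orthonormal basis of `ker X`, which has codimension at most `t` and
on which `rectDiagonal rt rs s - X` agrees with `rectDiagonal rt rs s`. -/
theorem sum_Ico_sq_le_trace_rectDiagonal_sub {rt rs t : ℕ} {s : ℕ → ℝ} (hs : Antitone s)
    (hs0 : ∀ i, 0 ≤ s i) {X : Matrix (Fin rt) (Fin rs) ℝ} (hX : X.rank ≤ t) :
    ∑ k ∈ Ico t (min rt rs), s k ^ 2
      ≤ ((rectDiagonal rt rs s - X)ᵀ * (rectDiagonal rt rs s - X)).trace := by
  set K := LinearMap.ker (toEuclideanLin X)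
  set b := stdOrthonormalBasis ℝ K
  set u : Fin (Module.finrank ℝ K) → EuclideanSpace ℝ (Fin rs) := fun l => b l
  have hu : Orthonormal ℝ u := b.orthonormal.comp_linearIsometry K.subtypeₗᵢ
  have hker : ∀ l, X *ᵥ (u l).ofLp = 0 := fun l => by
    have h := LinearMap.mem_ker.mp (b l).2
    rwa [toLpLin_apply, WithLp.toLp_eq_zero] at h
  have hdim : rs - t ≤ Module.finrank ℝ K := by
    have hrank : X.rank = Module.finrank ℝ (LinearMap.range (toEuclideanLin X)) :=
      X.rank_eq_finrank_range_toLin (EuclideanSpace.basisFun _ ℝ).toBasis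
        (EuclideanSpace.basisFun _ ℝ).toBasis
    have h : _ + Module.finrank ℝ K = _ :=
      LinearMap.finrank_range_add_finrank_ker (toEuclideanLin X)
    rw [finrank_euclideanSpace_fin, ← hrank] at h
    omega
  set a : ℕ → ℝ := fun k => if k < rt then s k ^ 2 else 0
  set d : ℕ → ℝ := fun k => if h : k < rs then ∑ l, u l ⟨k, h⟩ ^ 2 else 0
  have ha : Antitone a := fun i j hij => by
    by_cases hj : j < rt
    · simp only [a, if_pos hj, if_pos (hij.trans_lt hj)]
      exact pow_le_pow_left₀ (hs0 j) (hs hij) 2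
    · simp only [a, if_neg hj]
      split_ifs <;> positivity
  have hd0 : ∀ k, 0 ≤ d k := fun k => by
    simp only [d]; split_ifs <;> positivity
  have hd1 : ∀ k, d k ≤ 1 := fun k => by
    simp only [d]; split_ifs
    · exact hu.sum_sq_apply_le_one _
    · exact zero_le_one
  have hsum : ∑ k ∈ range rs, d k = Module.finrank ℝ K := by
    rw [← sum_fin_eq_sum_range (fun j => ∑ l, u l j ^ 2), hu.sum_sum_sq_apply, Fintype.card_fin]
  calc ∑ k ∈ Ico t (min rt rs), s k ^ 2 = ∑ k ∈ Ico t rs, a k := by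
        rw [← sum_filter, Ico_filter_lt, min_comm]
    _ ≤ ∑ k ∈ range rs, a k * d k :=
        sum_Ico_le_sum_mul_of_sub_le_sum ha (by positivity) hd0 hd1
          (by rw [hsum]; exact_mod_cast hdim)
    _ = ∑ l, (rectDiagonal rt rs s *ᵥ (u l).ofLp) ⬝ᵥ (rectDiagonal rt rs s *ᵥ (u l).ofLp) := by
        simp only [mulVec_dotProduct_mulVec, transpose_mul_self_rectDiagonal]
        simp only [mulVec_diagonal, dotProduct]
        rw [sum_comm, sum_fin_eq_sum_range]
        refine sum_congr rfl fun k hk => ?_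
        simp only [a, d, dif_pos (mem_range.mp hk), mul_sum]
        exact sum_congr rfl fun l _ => by ring
    _ = ∑ l, ((rectDiagonal rt rs s - X) *ᵥ (u l).ofLp)
          ⬝ᵥ ((rectDiagonal rt rs s - X) *ᵥ (u l).ofLp) := by
        simp only [sub_mulVec, hker, sub_zero]
    _ ≤ _ := hu.sum_mulVec_dotProduct_le_trace _

lemma trace_transpose_mul_self_mul_mul_transpose {m n p q : Type*} [Fintype m] [Fintype n]
    [Fintype p] [Fintype q] [DecidableEq p] [DecidableEq q] {U : Matrix m p ℝ} {V : Matrix n q ℝ}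
    (hU : Uᵀ * U = 1) (hV : Vᵀ * V = 1) (Y : Matrix p q ℝ) :
    ((U * Y * Vᵀ)ᵀ * (U * Y * Vᵀ)).trace = (Yᵀ * Y).trace := by
  simp only [transpose_mul, transpose_transpose, Matrix.mul_assoc]
  rw [← Matrix.mul_assoc Uᵀ, hU, Matrix.one_mul, trace_mul_comm]
  simp only [Matrix.mul_assoc, hV, Matrix.mul_one]

theorem sum_Ico_sq_le_trace_sub_of_eq_mul_rectDiagonal_mul {rt rs t : ℕ} {s : ℕ → ℝ}
    (hs : Antitone s) (hs0 : ∀ i, 0 ≤ s i) {F : Matrix (Fin rt) (Fin rs) ℝ}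
    {U : Matrix (Fin rt) (Fin rt) ℝ} {V : Matrix (Fin rs) (Fin rs) ℝ} (hU : Uᵀ * U = 1)
    (hV : Vᵀ * V = 1) (hF : F = U * rectDiagonal rt rs s * Vᵀ) {X : Matrix (Fin rt) (Fin rs) ℝ}
    (hX : X.rank ≤ t) :
    ∑ k ∈ Finset.Ico t (min rt rs), s k ^ 2 ≤ ((F - X)ᵀ * (F - X)).trace := by
  have hconj : F - X = U * (rectDiagonal rt rs s - Uᵀ * X * V) * Vᵀ := by
    rw [hF, Matrix.mul_sub, Matrix.sub_mul]
    simp only [← Matrix.mul_assoc, mul_eq_one_comm.mp hU, Matrix.one_mul]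
    simp only [Matrix.mul_assoc, mul_eq_one_comm.mp hV, Matrix.mul_one]
  rw [hconj, trace_transpose_mul_self_mul_mul_transpose hU hV]
  exact sum_Ico_sq_le_trace_rectDiagonal_sub hs hs0
    ((rank_mul_le_left _ _).trans ((rank_mul_le_right _ _).trans hX))

/-- Optimal alignment: under the K-FAC assumption `JᵀJ = S ⊗ T`, with `G` the loss gradient
(`vec(G) = −Jᵀz`) and `F = D_T^{-1/2}U_Tᵀ G U_S D_S^{-1/2}` the whitened gradient with ordered
singular values `s`, for any rank-`r` LoRA parametrization `H = [I ⊗ B₀ | A₀ᵀ ⊗ I]`: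
`‖(JJ† − (JH)(JH)†)z‖₂ = ‖(I − Π_{D_T^{1/2}U_TᵀB₀}) F (I − Π_{D_S^{1/2}U_SᵀA₀ᵀ})‖_F
≥ (Σ_{i≥2r+1} s_i(F)²)^{1/2}`. -/
theorem optimal_alignment_squared_loss {n din dout rs rt r : ℕ}
    (J : Matrix (Fin n) (Fin din × Fin dout) ℝ)
    (S : Matrix (Fin din) (Fin din) ℝ) (T : Matrix (Fin dout) (Fin dout) ℝ)
    (US : Matrix (Fin din) (Fin rs) ℝ) (UT : Matrix (Fin dout) (Fin rt) ℝ)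
    (dS : Fin rs → ℝ) (dT : Fin rt → ℝ)
    (hUS : USᵀ * US = 1) (hUT : UTᵀ * UT = 1)
    (hdS : ∀ i, 0 < dS i) (hdT : ∀ i, 0 < dT i)
    (hS : S = US * diagonal dS * USᵀ) (hT : T = UT * diagonal dT * UTᵀ)
    (hkfac : Jᵀ * J = S ⊗ₖ T)
    (z : Fin n → ℝ)
    (G : Matrix (Fin dout) (Fin din) ℝ)
    (hG : ∀ (i : Fin dout) (j : Fin din), G i j = -(Jᵀ.mulVec z) (j, i))
    (F : Matrix (Fin rt) (Fin rs) ℝ)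
    (hF : F = diagonal (fun i => (Real.sqrt (dT i))⁻¹) * UTᵀ * G
              * US * diagonal (fun i => (Real.sqrt (dS i))⁻¹))
    -- a full SVD of `F` with ordered singular values `s`
    (UF : Matrix (Fin rt) (Fin rt) ℝ) (VF : Matrix (Fin rs) (Fin rs) ℝ)
    (s : ℕ → ℝ)
    (hUF : UFᵀ * UF = 1) (hVF : VFᵀ * VF = 1)
    (hs_anti : ∀ i j, i ≤ j → s j ≤ s i) (hs_nonneg : ∀ i, 0 ≤ s i)
    (hFsvd : F = UF * (Matrix.of fun (i : Fin rt) (j : Fin rs) =>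
                  if (i : ℕ) = (j : ℕ) then s i else 0) * VFᵀ)
    (A₀ : Matrix (Fin r) (Fin din) ℝ) (B₀ : Matrix (Fin dout) (Fin r) ℝ)
    (H : Matrix (Fin din × Fin dout) ((Fin din × Fin r) ⊕ (Fin r × Fin dout)) ℝ)
    (hH : H = fromCols ((1 : Matrix (Fin din) (Fin din) ℝ) ⊗ₖ B₀)
                (A₀ᵀ ⊗ₖ (1 : Matrix (Fin dout) (Fin dout) ℝ)))
    (Jp : Matrix (Fin din × Fin dout) (Fin n) ℝ) (hJp : IsMPInv J Jp)
    (JHp : Matrix ((Fin din × Fin r) ⊕ (Fin r × Fin dout)) (Fin n) ℝ)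
    (hJHp : IsMPInv (J * H) JHp)
    (PAp : Matrix (Fin r) (Fin rs) ℝ)
    (hPAp : IsMPInv (diagonal (fun i => Real.sqrt (dS i)) * USᵀ * A₀ᵀ) PAp)
    (PBp : Matrix (Fin r) (Fin rt) ℝ)
    (hPBp : IsMPInv (diagonal (fun i => Real.sqrt (dT i)) * UTᵀ * B₀) PBp) :
    _root_.enorm ((J * Jp - (J * H) * JHp).mulVec z)
      = frobNorm
          ((1 - (diagonal (fun i => Real.sqrt (dT i)) * UTᵀ * B₀) * PBp) * F
            * (1 - (diagonal (fun i => Real.sqrt (dS i)) * USᵀ * A₀ᵀ) * PAp)) ∧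
    Real.sqrt (∑ i ∈ Finset.Ico (2 * r) (min rt rs), s i ^ 2)
      ≤ frobNorm
          ((1 - (diagonal (fun i => Real.sqrt (dT i)) * UTᵀ * B₀) * PBp) * F
            * (1 - (diagonal (fun i => Real.sqrt (dS i)) * USᵀ * A₀ᵀ) * PAp)) := by
  set ΩS : Matrix (Fin rs) (Fin din) ℝ := diagonal (fun i => Real.sqrt (dS i)) * USᵀ
  set ΩT : Matrix (Fin rt) (Fin dout) ℝ := diagonal (fun i => Real.sqrt (dT i)) * UTᵀ
  set ΛS : Matrix (Fin rs) (Fin din) ℝ := diagonal (fun i => (Real.sqrt (dS i))⁻¹) * USᵀ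
  set ΛT : Matrix (Fin rt) (Fin dout) ℝ := diagonal (fun i => (Real.sqrt (dT i))⁻¹) * UTᵀ
  set M := (1 - ΩT * B₀ * PBp) * F * (1 - ΩS * A₀ᵀ * PAp)
  have hΛS : ΛS * ΩSᵀ = 1 := diagonal_inv_sqrt_mul_transpose_mul_transpose US hUS hdS
  have hΛT : ΛT * ΩTᵀ = 1 := diagonal_inv_sqrt_mul_transpose_mul_transpose UT hUT hdT
  have hkfac' : Jᵀ * J = (ΩSᵀ * ΩS) ⊗ₖ (ΩTᵀ * ΩT) := by
    rw [hkfac, hS, hT, transpose_mul_self_diagonal_sqrt_mul_transpose US fun i => (hdS i).le,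
      transpose_mul_self_diagonal_sqrt_mul_transpose UT fun i => (hdT i).le]
  have hgrad : Jᵀ *ᵥ z = -vec G := by
    ext ⟨j, i⟩
    simp only [vec, hG, Pi.neg_apply, neg_neg]
  have hGF : G = ΩTᵀ * F * ΩS := by
    have hFΛ : F = ΛT * G * ΛSᵀ := by
      simp only [hF, ΛT, ΛS, transpose_mul, diagonal_transpose, transpose_transpose,
        Matrix.mul_assoc]
    rw [hFΛ]
    exact eq_transpose_mul_mul_mul_of_kronecker hJp hkfac' hgrad hΛS hΛT
  have hres := dotProduct_sub_mulVec_vec_self_eq_whitened hkfac' (hGF ▸ hgrad)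
  have hfull := hJp.dotProduct_proj_eq_of_surjective z vec_bijective.surjective hres
    (isLeast_frob_add_whiten hΛS hΛT F)
  have hlora := hJHp.dotProduct_proj_eq_of_surjective z surjective_sumElim_vec
    (fun AB => by rw [← mulVec_mulVec, hH, fromCols_kronecker_mulVec_sumElim_vec, hres])
    (isLeast_frob_add_whiten_lora hΛS hΛT hPAp hPBp F)
  have hsq : ((J * Jp - J * H * JHp) *ᵥ z) ⬝ᵥ ((J * Jp - J * H * JHp) *ᵥ z) = (Mᵀ * M).trace := by
    rw [hJp.dotProduct_proj_sub_proj hJHp, hfull, hlora]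
    ring
  have hrank : (F - M).rank ≤ 2 * r := by
    rw [sub_one_sub_proj_mul_mul_one_sub_proj hPAp, two_mul]
    exact (rank_mul_add_mul_le _ _ _ _).trans_eq (by simp only [Fintype.card_fin])
  refine ⟨by rw [enorm_eq_sqrt_dotProduct, frobNorm_eq_sqrt_trace, hsq], ?_⟩
  rw [frobNorm_eq_sqrt_trace]
  refine Real.sqrt_le_sqrt ?_
  simpa only [sub_sub_cancel] using
    sum_Ico_sq_le_trace_sub_of_eq_mul_rectDiagonal_mul hs_anti hs_nonneg hUF hVF hFsvd hrank
end

section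
/- Let J ∈ ℝ^{n×(d_in·d_out)} admit the thin SVD J = U (D_S^{1/2} ⊗ D_T^{1/2}) (U_S ⊗ U_T)ᵀ, where U ∈ ℝ^{n×(r_s r_t)} has orthonormal columns, U_S ∈ ℝ^{d_in×r_s} and U_T ∈ ℝ^{d_out×r_t} have orthonormal columns, and D_S, D_T are diagonal positive definite. Let C ∈ ℝ^{n×n} be such that Jᵀ C J = (U_S D_S U_Sᵀ) ⊗ O for some symmetric O ∈ ℝ^{d_out×d_out}. Then Uᵀ C U = I_{r_s} ⊗ Φ, where Φ = D_T^{−1/2} U_Tᵀ O U_T D_T^{−1/2}; consequently, if Φ is positive definite, (Uᵀ C U)^{1/2} = I_{r_s} ⊗ Φ^{1/2}. -/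
/-!
Sandwiching `Jᵀ C J` between `(U_S ⊗ U_T)ᵀ` and `U_S ⊗ U_T` strips the orthonormal factors of
the SVD and leaves `D^{1/2} (Uᵀ C U) D^{1/2}` with `D^{1/2} = D_S^{1/2} ⊗ D_T^{1/2}`; on the
K-FAC side the same sandwich leaves `D_S ⊗ U_Tᵀ O U_T = D^{1/2} (I ⊗ Φ) D^{1/2}`. Cancelling the
invertible `D^{1/2}` gives `Uᵀ C U = I ⊗ Φ`, and the square root of a Kronecker product of
positive semidefinite matrices is the Kronecker product of the square roots.
-/

open Matrix
open scoped Kronecker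

section OldSqrt
open scoped ComplexOrder

/-- The positive semidefinite square root of a positive semidefinite matrix (the definition
`Matrix.PosSemidef.sqrt` of the older Mathlib, no longer present). -/
noncomputable def Matrix.PosSemidef.sqrt {n 𝕜 : Type*} [Fintype n] [RCLike 𝕜] [DecidableEq n]
    {A : Matrix n n 𝕜} (hA : A.PosSemidef) : Matrix n n 𝕜 :=
  hA.1.eigenvectorUnitary.1 * diagonal ((↑) ∘ (√·) ∘ hA.1.eigenvalues) *
  (star hA.1.eigenvectorUnitary : Matrix n n 𝕜)

end OldSqrt

namespace Matrix

variable {R l m n p : Type*}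

section CommRing

variable [CommRing R]

theorem transpose_mul_mul_mul_transpose_mul [Fintype m] [Fintype n] [DecidableEq n]
    {W : Matrix m n R} (hW : Wᵀ * W = 1) (M : Matrix n n R) : Wᵀ * (W * M * Wᵀ) * W = M := by
  simp only [Matrix.mul_assoc, hW, Matrix.mul_one, ← Matrix.mul_assoc Wᵀ W, Matrix.one_mul]

theorem transpose_mul_mul_of_eq_mul_mul_transpose [Fintype l] [Fintype m] [Fintype n]
    {J : Matrix m p R} {U : Matrix m n R} {D : Matrix n l R} {W : Matrix p l R}
    (hJ : J = U * D * Wᵀ) (C : Matrix m m R) :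
    Jᵀ * C * J = W * (Dᵀ * (Uᵀ * C * U) * D) * Wᵀ := by
  simp only [hJ, transpose_mul, transpose_transpose, Matrix.mul_assoc]

theorem transpose_kronecker_mul_self_eq_one [Fintype m] [Fintype p] [DecidableEq n]
    [DecidableEq l] {A : Matrix m n R} {B : Matrix p l R}
    (hA : Aᵀ * A = 1) (hB : Bᵀ * B = 1) : (A ⊗ₖ B)ᵀ * (A ⊗ₖ B) = 1 := by
  rw [← kroneckerMap_transpose, ← mul_kronecker_mul, hA, hB, one_kronecker_one]

end CommRing

variable [Fintype n] [DecidableEq n]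

theorem diagonal_mul_diagonal_inv_mul_mul_diagonal_inv_mul_diagonal [Field R]
    {v : n → R} (hv : ∀ i, v i ≠ 0) (M : Matrix n n R) :
    diagonal v * (diagonal (fun i => (v i)⁻¹) * M * diagonal (fun i => (v i)⁻¹)) * diagonal v
      = M := by
  have hinv : diagonal (fun i => (v i)⁻¹) * diagonal v = 1 := by
    rw [diagonal_mul_diagonal, ← diagonal_one]
    exact congrArg diagonal (funext fun i => inv_mul_cancel₀ (hv i))
  have hinv' : diagonal v * diagonal (fun i => (v i)⁻¹) = 1 := by
    rw [diagonal_mul_diagonal, ← diagonal_one]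
    exact congrArg diagonal (funext fun i => mul_inv_cancel₀ (hv i))
  simp only [Matrix.mul_assoc, hinv, Matrix.mul_one, ← Matrix.mul_assoc (diagonal v), hinv',
    Matrix.one_mul]

theorem diagonal_sqrt_mul_diagonal_sqrt {d : n → ℝ} (hd : ∀ i, 0 ≤ d i) :
    diagonal (fun i => √(d i)) * diagonal (fun i => √(d i)) = diagonal d := by
  rw [diagonal_mul_diagonal]
  exact congrArg diagonal (funext fun i => Real.mul_self_sqrt (hd i))

theorem isUnit_diagonal_sqrt {d : n → ℝ} (hd : ∀ i, 0 < d i) :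
    IsUnit (diagonal fun i => √(d i)) :=
  isUnit_diagonal.2 <| Pi.isUnit_iff.2 fun i => (Real.sqrt_pos.2 (hd i)).ne'.isUnit

end Matrix

section Sqrt

open scoped ComplexOrder MatrixOrder

variable {m n 𝕜 : Type*} [Fintype m] [Fintype n] [DecidableEq m] [DecidableEq n] [RCLike 𝕜]

theorem Matrix.PosSemidef.sqrt_eq_cfcSqrt {A : Matrix n n 𝕜} (hA : A.PosSemidef) :
    hA.sqrt = CFC.sqrt A := by
  rw [CFC.sqrt_eq_real_sqrt A hA.nonneg, cfcₙ_eq_cfc, hA.1.cfc_eq]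
  rfl

theorem CFC.sqrt_kronecker {A : Matrix m m 𝕜} {B : Matrix n n 𝕜} (hA : A.PosSemidef)
    (hB : B.PosSemidef) : CFC.sqrt (A ⊗ₖ B) = CFC.sqrt A ⊗ₖ CFC.sqrt B := by
  refine CFC.sqrt_unique ?_ ((CFC.sqrt_nonneg A).posSemidef.kronecker
    (CFC.sqrt_nonneg B).posSemidef).nonneg
  rw [← mul_kronecker_mul, CFC.sqrt_mul_sqrt_self A hA.nonneg,
    CFC.sqrt_mul_sqrt_self B hB.nonneg]

end Sqrt

theorem compressed_curvature_kronecker_general {n din dout rs rt : ℕ}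
    (J : Matrix (Fin n) (Fin din × Fin dout) ℝ)
    (U : Matrix (Fin n) (Fin rs × Fin rt) ℝ)
    (US : Matrix (Fin din) (Fin rs) ℝ) (UT : Matrix (Fin dout) (Fin rt) ℝ)
    (dS : Fin rs → ℝ) (dT : Fin rt → ℝ)
    (hUS : USᵀ * US = 1) (hUT : UTᵀ * UT = 1)
    (hdS : ∀ i, 0 < dS i) (hdT : ∀ i, 0 < dT i)
    (hJ : J = U * (diagonal (fun i => Real.sqrt (dS i)) ⊗ₖ diagonal (fun i => Real.sqrt (dT i)))
            * (US ⊗ₖ UT)ᵀ)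
    (C : Matrix (Fin n) (Fin n) ℝ)
    (O : Matrix (Fin dout) (Fin dout) ℝ)
    (hJCJ : Jᵀ * C * J = (US * diagonal dS * USᵀ) ⊗ₖ O)
    (Φ : Matrix (Fin rt) (Fin rt) ℝ)
    (hΦ : Φ = diagonal (fun i => (Real.sqrt (dT i))⁻¹) * UTᵀ * O * UT
              * diagonal (fun i => (Real.sqrt (dT i))⁻¹)) :
    Uᵀ * C * U = (1 : Matrix (Fin rs) (Fin rs) ℝ) ⊗ₖ Φ ∧
    ∀ (hΦpd : Φ.PosDef) (hUCU : (Uᵀ * C * U).PosSemidef),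
      hUCU.sqrt = (1 : Matrix (Fin rs) (Fin rs) ℝ) ⊗ₖ hΦpd.posSemidef.sqrt := by
  set DS := diagonal fun i => √(dS i)
  set DT := diagonal fun i => √(dT i)
  have hK : IsUnit (DS ⊗ₖ DT) := (isUnit_diagonal_sqrt hdS).kronecker (isUnit_diagonal_sqrt hdT)
  have hKt : (DS ⊗ₖ DT)ᵀ = DS ⊗ₖ DT := by
    rw [← kroneckerMap_transpose, diagonal_transpose, diagonal_transpose]
  have hΦ' : DT * Φ * DT = UTᵀ * O * UT := by
    have := diagonal_mul_diagonal_inv_mul_mul_diagonal_inv_mul_diagonal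
      (fun i => (Real.sqrt_pos.2 (hdT i)).ne') (UTᵀ * O * UT)
    simpa only [hΦ, Matrix.mul_assoc] using this
  have hMain : Uᵀ * C * U = 1 ⊗ₖ Φ := by
    refine hK.mul_left_cancel (hK.mul_right_cancel ?_)
    calc DS ⊗ₖ DT * (Uᵀ * C * U) * (DS ⊗ₖ DT)
        = (US ⊗ₖ UT)ᵀ * (Jᵀ * C * J) * (US ⊗ₖ UT) := by
          rw [transpose_mul_mul_of_eq_mul_mul_transpose hJ, hKt,
            transpose_mul_mul_mul_transpose_mul (transpose_kronecker_mul_self_eq_one hUS hUT)]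
      _ = (USᵀ * (US * diagonal dS * USᵀ) * US) ⊗ₖ (UTᵀ * O * UT) := by
          rw [hJCJ, ← kroneckerMap_transpose, ← mul_kronecker_mul, ← mul_kronecker_mul]
      _ = (DS * 1 * DS) ⊗ₖ (DT * Φ * DT) := by
          rw [transpose_mul_mul_mul_transpose_mul hUS, hΦ', Matrix.mul_one,
            diagonal_sqrt_mul_diagonal_sqrt fun i => (hdS i).le]
      _ = DS ⊗ₖ DT * (1 ⊗ₖ Φ) * (DS ⊗ₖ DT) := by
          rw [mul_kronecker_mul, mul_kronecker_mul]
  refine ⟨hMain, fun hΦpd hUCU => ?_⟩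
  open scoped MatrixOrder in
  rw [hUCU.sqrt_eq_cfcSqrt, hΦpd.posSemidef.sqrt_eq_cfcSqrt, hMain,
    CFC.sqrt_kronecker PosSemidef.one hΦpd.posSemidef, CFC.sqrt_one]

/-- Under the K-FAC factorization of the curvature-weighted Gram matrix
`Jᵀ C J = (U_S D_S U_Sᵀ) ⊗ O` and a thin SVD
`J = U (D_S^{1/2} ⊗ D_T^{1/2})(U_S ⊗ U_T)ᵀ`, the compressed curvature factorizes as
`Uᵀ C U = I ⊗ Φ` with `Φ = D_T^{-1/2} U_Tᵀ O U_T D_T^{-1/2}`; consequently, if `Φ` is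
positive definite then `(Uᵀ C U)^{1/2} = I ⊗ Φ^{1/2}`. -/
theorem compressed_curvature_kronecker {n din dout rs rt : ℕ}
    (J : Matrix (Fin n) (Fin din × Fin dout) ℝ)
    (U : Matrix (Fin n) (Fin rs × Fin rt) ℝ)
    (US : Matrix (Fin din) (Fin rs) ℝ) (UT : Matrix (Fin dout) (Fin rt) ℝ)
    (dS : Fin rs → ℝ) (dT : Fin rt → ℝ)
    (hU : Uᵀ * U = 1) (hUS : USᵀ * US = 1) (hUT : UTᵀ * UT = 1)
    (hdS : ∀ i, 0 < dS i) (hdT : ∀ i, 0 < dT i)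
    (hJ : J = U * (diagonal (fun i => Real.sqrt (dS i)) ⊗ₖ diagonal (fun i => Real.sqrt (dT i)))
            * (US ⊗ₖ UT)ᵀ)
    (C : Matrix (Fin n) (Fin n) ℝ)
    (O : Matrix (Fin dout) (Fin dout) ℝ) (hO : Oᵀ = O)
    (hJCJ : Jᵀ * C * J = (US * diagonal dS * USᵀ) ⊗ₖ O)
    (Φ : Matrix (Fin rt) (Fin rt) ℝ)
    (hΦ : Φ = diagonal (fun i => (Real.sqrt (dT i))⁻¹) * UTᵀ * O * UT
              * diagonal (fun i => (Real.sqrt (dT i))⁻¹)) :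
    Uᵀ * C * U = (1 : Matrix (Fin rs) (Fin rs) ℝ) ⊗ₖ Φ ∧
    ∀ (hΦpd : Φ.PosDef) (hUCU : (Uᵀ * C * U).PosSemidef),
      hUCU.sqrt = (1 : Matrix (Fin rs) (Fin rs) ℝ) ⊗ₖ hΦpd.posSemidef.sqrt :=
  compressed_curvature_kronecker_general J U US UT dS dT hUS hUT hdS hdT hJ C O hJCJ Φ hΦ
end
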